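/- Under the hypotheses of the generalized Oevel theorem, if additionally G is a master integral of all the vector fields X_i (i.e., X_i(X_k(G)) = 0 for all i, k), then each function G_j = Y_j(G) is also a master integral of every X_k, i.e., X_k(X_k(G_j)) = 0 for all j, k; consequently for each k the functions L_{ij}^k = X_k(G_i)G_j − X_k(G_j)G_i are first integrals of X_k. -/

import Mathlib

open Polynomial

noncomputable def vbr {E : Type*} [NormedAddCommGroup E] [NormedSpace ℝ E]
    (X Y : E → E) : E → E :=
  fun x => fderiv ℝ Y x (X x) - fderiv ℝ X x (Y x)

def tapp {E : Type*} [NormedAddCommGroup E] [NormedSpace ℝ E]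
    (R : E → E →L[ℝ] E) (X : E → E) : E → E :=
  fun x => R x (X x)

noncomputable def lieD {E : Type*} [NormedAddCommGroup E] [NormedSpace ℝ E]
    (X : E → E) (T : E → E →L[ℝ] E) (Y : E → E) : E → E :=
  fun x => vbr X (tapp T Y) x - T x (vbr X Y x)

def IsNijenhuis {E : Type*} [NormedAddCommGroup E] [NormedSpace ℝ E]
    (R : E → E →L[ℝ] E) : Prop :=
  ∀ X Y : E → E, ContDiff ℝ (⊤ : ℕ∞) X → ContDiff ℝ (⊤ : ℕ∞) Y → ∀ x,
    vbr (tapp R X) (tapp R Y) x - R x (vbr (tapp R X) Y x)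
      - R x (vbr X (tapp R Y) x) + R x (R x (vbr X Y x)) = 0

/-- Action of a vector field on a function. -/
noncomputable def vact {E : Type*} [NormedAddCommGroup E] [NormedSpace ℝ E]
    (X : E → E) (f : E → ℝ) : E → ℝ :=
  fun x => fderiv ℝ f x (X x)

section OevelAux

variable {E : Type*} [NormedAddCommGroup E] [NormedSpace ℝ E]

lemma iter_tapp_contDiff {R : E → E →L[ℝ] E} (hR : ContDiff ℝ (⊤ : ℕ∞) (fun x => R x)) :
    ∀ (n : ℕ) {Y : E → E}, ContDiff ℝ (⊤ : ℕ∞) Y → ContDiff ℝ (⊤ : ℕ∞) ((tapp R)^[n] Y) := by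
  intro n
  induction n with
  | zero => intro Y hY; exact hY
  | succ n ih =>
    intro Y hY
    rw [Function.iterate_succ_apply']
    exact hR.clm_apply (ih hY)

lemma vact_contDiff {X : E → E} {f : E → ℝ} (hX : ContDiff ℝ (⊤ : ℕ∞) X) (hf : ContDiff ℝ (⊤ : ℕ∞) f) :
    ContDiff ℝ (⊤ : ℕ∞) (vact X f) := (hf.fderiv_right (by simp)).clm_apply hX

lemma vbr_swap (X Y : E → E) (x : E) : vbr X Y x = -vbr Y X x := by
  simp [vbr, neg_sub]

lemma vbr_self (X : E → E) (x : E) : vbr X X x = 0 := by simp [vbr]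

lemma iter_tapp_apply (R : E → E →L[ℝ] E) : ∀ (n : ℕ) (X : E → E) (x : E),
    (tapp R)^[n] X x = ((R x)^n) (X x) := by
  intro n
  induction n with
  | zero => intro X x; simp
  | succ n ih =>
    intro X x
    rw [Function.iterate_succ_apply, ih, pow_succ, ContinuousLinearMap.mul_apply]
    rfl

/-- The commutator of the actions of two vector fields is the action of the bracket. -/
lemma vact_comm {X Y : E → E} (hX : ContDiff ℝ (⊤ : ℕ∞) X) (hY : ContDiff ℝ (⊤ : ℕ∞) Y)
    {f : E → ℝ} (hf : ContDiff ℝ (⊤ : ℕ∞) f) (x : E) :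
    vact X (vact Y f) x = vact Y (vact X f) x + vact (vbr X Y) f x := by
  have hdf : ContDiff ℝ (⊤ : ℕ∞) (fderiv ℝ f) := hf.fderiv_right (by simp)
  have e1 : vact X (vact Y f) x
      = fderiv ℝ f x (fderiv ℝ Y x (X x)) + fderiv ℝ (fderiv ℝ f) x (X x) (Y x) := by
    show fderiv ℝ (fun y => fderiv ℝ f y (Y y)) x (X x) = _
    rw [fderiv_clm_apply (hdf.differentiable (by simp) x) (hY.differentiable (by simp) x)]
    simp
  have e2 : vact Y (vact X f) x
      = fderiv ℝ f x (fderiv ℝ X x (Y x)) + fderiv ℝ (fderiv ℝ f) x (Y x) (X x) := by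
    show fderiv ℝ (fun y => fderiv ℝ f y (X y)) x (Y x) = _
    rw [fderiv_clm_apply (hdf.differentiable (by simp) x) (hX.differentiable (by simp) x)]
    simp
  have hsym : fderiv ℝ (fderiv ℝ f) x (X x) (Y x) = fderiv ℝ (fderiv ℝ f) x (Y x) (X x) :=
    (hf.contDiffAt.isSymmSndFDerivAt (by rw [minSmoothness_of_isRCLikeNormedField]; exact WithTop.coe_le_coe.mpr (le_top : (2 : ℕ∞) ≤ ⊤))) (X x) (Y x)
  have e3 : vact (vbr X Y) f x
      = fderiv ℝ f x (fderiv ℝ Y x (X x)) - fderiv ℝ f x (fderiv ℝ X x (Y x)) := by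
    show fderiv ℝ f x (vbr X Y x) = _
    rw [vbr, map_sub]
  rw [e1, e2, e3, hsym]
  ring

/-- `L_{R^i X} R = 0` propagates along powers of a Nijenhuis tensor. -/
lemma lieD_iter {R : E → E →L[ℝ] E} {X : E → E} (hR : ContDiff ℝ (⊤ : ℕ∞) (fun x => R x))
    (hX : ContDiff ℝ (⊤ : ℕ∞) X) (hNij : IsNijenhuis R)
    (hrec : ∀ Y : E → E, ContDiff ℝ (⊤ : ℕ∞) Y → ∀ x, lieD X R Y x = 0) :
    ∀ (i : ℕ) (Y : E → E), ContDiff ℝ (⊤ : ℕ∞) Y → ∀ x, lieD ((tapp R)^[i] X) R Y x = 0 := by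
  intro i
  induction i with
  | zero => exact hrec
  | succ i ih =>
    intro Y hY x
    have hXi : ContDiff ℝ (⊤ : ℕ∞) ((tapp R)^[i] X) := iter_tapp_contDiff hR i hX
    have h1 := ih Y hY x
    simp only [lieD] at h1 ⊢
    have h3 : vbr ((tapp R)^[i] X) (tapp R Y) x = R x (vbr ((tapp R)^[i] X) Y x) :=
      sub_eq_zero.mp h1
    have hN := hNij ((tapp R)^[i] X) Y hXi hY x
    rw [h3] at hN
    rw [Function.iterate_succ_apply']
    simpa using hN

end OevelAux

/-- Polynomial recursion encoding `[PX, R^k X] = -(aeval R (dPoly a b k)) X`. -/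
noncomputable def dPoly (a b : ℝ[X]) : ℕ → ℝ[X]
  | 0 => a
  | (k+1) => Polynomial.X * dPoly a b k - Polynomial.X ^ k * b

section OevelAux2

variable {E : Type*} [NormedAddCommGroup E] [NormedSpace ℝ E]

lemma vbr_PX_Xk {R P : E → E →L[ℝ] E} {X : E → E} (a b : ℝ[X])
    (hR : ContDiff ℝ (⊤ : ℕ∞) (fun x => R x)) (hX : ContDiff ℝ (⊤ : ℕ∞) X)
    (hP : ∀ Y : E → E, ContDiff ℝ (⊤ : ℕ∞) Y → ∀ x, lieD X P Y x = aeval (R x) a (Y x))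
    (hPX : ∀ Y : E → E, ContDiff ℝ (⊤ : ℕ∞) Y → ∀ x,
        lieD (tapp P X) R Y x = aeval (R x) b (Y x)) :
    ∀ (k : ℕ) (x : E),
      vbr (tapp P X) ((tapp R)^[k] X) x = -(aeval (R x) (dPoly a b k) (X x)) := by
  intro k
  induction k with
  | zero =>
    intro x
    have h := hP X hX x
    simp only [lieD, vbr_self, map_zero, sub_zero] at h
    rw [Function.iterate_zero_apply, vbr_swap, h, dPoly]
  | succ k ih =>
    intro x
    have hXk : ContDiff ℝ (⊤ : ℕ∞) ((tapp R)^[k] X) := iter_tapp_contDiff hR k hX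
    have h := hPX ((tapp R)^[k] X) hXk x
    simp only [lieD] at h
    have h2 : vbr (tapp P X) (tapp R ((tapp R)^[k] X)) x
        = aeval (R x) b (((tapp R)^[k] X) x) + R x (vbr (tapp P X) ((tapp R)^[k] X) x) := by
      rw [← h]; abel
    rw [Function.iterate_succ_apply', h2, ih x, iter_tapp_apply]
    have hb : aeval (R x) b (((R x) ^ k) (X x)) = aeval (R x) (Polynomial.X ^ k * b) (X x) := by
      rw [mul_comm, map_mul, map_pow, aeval_X, ContinuousLinearMap.mul_apply]
    have hc : R x (aeval (R x) (dPoly a b k) (X x))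
        = aeval (R x) (Polynomial.X * dPoly a b k) (X x) := by
      rw [map_mul, aeval_X, ContinuousLinearMap.mul_apply]
    rw [hb, map_neg, hc, dPoly, map_sub]
    simp only [ContinuousLinearMap.sub_apply]
    abel

lemma vbr_Xk_Yj {R P : E → E →L[ℝ] E} {X : E → E} (a b : ℝ[X])
    (hR : ContDiff ℝ (⊤ : ℕ∞) (fun x => R x)) (hPc : ContDiff ℝ (⊤ : ℕ∞) (fun x => P x))
    (hX : ContDiff ℝ (⊤ : ℕ∞) X) (hNij : IsNijenhuis R)
    (hrec : ∀ Y : E → E, ContDiff ℝ (⊤ : ℕ∞) Y → ∀ x, lieD X R Y x = 0)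
    (hP : ∀ Y : E → E, ContDiff ℝ (⊤ : ℕ∞) Y → ∀ x, lieD X P Y x = aeval (R x) a (Y x))
    (hPX : ∀ Y : E → E, ContDiff ℝ (⊤ : ℕ∞) Y → ∀ x,
        lieD (tapp P X) R Y x = aeval (R x) b (Y x)) :
    ∀ (k j : ℕ) (x : E),
      vbr ((tapp R)^[k] X) ((tapp R)^[j] (tapp P X)) x
        = aeval (R x) (Polynomial.X ^ j * dPoly a b k) (X x) := by
  have hPXs : ContDiff ℝ (⊤ : ℕ∞) (tapp P X) := hPc.clm_apply hX
  intro k j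
  induction j with
  | zero =>
    intro x
    rw [Function.iterate_zero_apply, vbr_swap, vbr_PX_Xk a b hR hX hP hPX k x, neg_neg,
      pow_zero, one_mul]
  | succ j ih =>
    intro x
    have hYj : ContDiff ℝ (⊤ : ℕ∞) ((tapp R)^[j] (tapp P X)) := iter_tapp_contDiff hR j hPXs
    have h := lieD_iter hR hX hNij hrec k ((tapp R)^[j] (tapp P X)) hYj x
    simp only [lieD] at h
    have h3 := sub_eq_zero.mp h
    have key : aeval (R x) (Polynomial.X ^ (j + 1) * dPoly a b k) (X x)
        = R x (aeval (R x) (Polynomial.X ^ j * dPoly a b k) (X x)) := by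
      rw [show (Polynomial.X : ℝ[X]) ^ (j + 1) * dPoly a b k
          = Polynomial.X * (Polynomial.X ^ j * dPoly a b k) by ring]
      rw [map_mul, aeval_X, ContinuousLinearMap.mul_apply]
    rw [Function.iterate_succ_apply', h3, ih x, key]

end OevelAux2

section OevelMain

variable {E : Type*} [NormedAddCommGroup E] [NormedSpace ℝ E]

lemma vact_add (Z : E → E) {f g : E → ℝ} {x : E} (hf : DifferentiableAt ℝ f x)
    (hg : DifferentiableAt ℝ g x) :
    vact Z (fun y => f y + g y) x = vact Z f x + vact Z g x := by
  simp only [vact, fderiv_fun_add hf hg, ContinuousLinearMap.add_apply]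

lemma vact_sum (Z : E → E) {s : Finset ℕ} {f : ℕ → E → ℝ} {x : E}
    (h : ∀ i ∈ s, DifferentiableAt ℝ (f i) x) :
    vact Z (fun y => ∑ i ∈ s, f i y) x = ∑ i ∈ s, vact Z (f i) x := by
  simp only [vact, fderiv_fun_sum h, ContinuousLinearMap.sum_apply]

lemma vact_const_mul (Z : E → E) (c : ℝ) {f : E → ℝ} {x : E}
    (hf : DifferentiableAt ℝ f x) :
    vact Z (fun y => c * f y) x = c * vact Z f x := by
  simp only [vact, fderiv_const_mul hf, ContinuousLinearMap.smul_apply, smul_eq_mul]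

lemma vact_zero (Z : E → E) (x : E) : vact Z (fun _ => (0 : ℝ)) x = 0 := by
  simp [vact]

lemma vact_mul (Z : E → E) {f g : E → ℝ} {x : E} (hf : DifferentiableAt ℝ f x)
    (hg : DifferentiableAt ℝ g x) :
    vact Z (fun y => f y * g y) x = vact Z f x * g x + f x * vact Z g x := by
  simp only [vact, fderiv_fun_mul hf hg, ContinuousLinearMap.add_apply,
    ContinuousLinearMap.smul_apply, smul_eq_mul]
  ring

lemma vact_sub (Z : E → E) {f g : E → ℝ} {x : E} (hf : DifferentiableAt ℝ f x)
    (hg : DifferentiableAt ℝ g x) :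
    vact Z (fun y => f y - g y) x = vact Z f x - vact Z g x := by
  simp only [vact, fderiv_fun_sub hf hg, ContinuousLinearMap.sub_apply]

lemma vact_aeval (R : E → E →L[ℝ] E) (X : E → E) (p : ℝ[X]) (f : E → ℝ) (x : E) :
    fderiv ℝ f x (aeval (R x) p (X x))
      = ∑ i ∈ Finset.range (p.natDegree + 1), p.coeff i * vact ((tapp R)^[i] X) f x := by
  rw [Polynomial.aeval_eq_sum_range]
  simp only [ContinuousLinearMap.sum_apply, ContinuousLinearMap.smul_apply, map_sum, map_smul,
    smul_eq_mul, vact, iter_tapp_apply]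

end OevelMain


/-- under the generalized Oevel hypotheses, if `G` is a master integral of
all the fields `X_i = R^i X` (`X_i(X_k(G)) = 0`), then each `G_j = Y_j(G)` with
`Y_j = R^j (PX)` is a master integral of every `X_k`, and the functions
`L_{ij}^k = X_k(G_i) G_j − X_k(G_j) G_i` are first integrals of `X_k`. -/
theorem master_integral_propagation
    {E : Type*} [NormedAddCommGroup E] [NormedSpace ℝ E]
    (R P : E → E →L[ℝ] E) (X : E → E) (a b : ℝ[X])
    (hRsmooth : ContDiff ℝ (⊤ : ℕ∞) (fun x => R x))
    (hPsmooth : ContDiff ℝ (⊤ : ℕ∞) (fun x => P x))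
    (hX : ContDiff ℝ (⊤ : ℕ∞) X)
    (hNij : IsNijenhuis R)
    (hrec : ∀ Y : E → E, ContDiff ℝ (⊤ : ℕ∞) Y → ∀ x, lieD X R Y x = 0)
    (hP : ∀ Y : E → E, ContDiff ℝ (⊤ : ℕ∞) Y → ∀ x, lieD X P Y x = aeval (R x) a (Y x))
    (hPX : ∀ Y : E → E, ContDiff ℝ (⊤ : ℕ∞) Y → ∀ x,
        lieD (tapp P X) R Y x = aeval (R x) b (Y x))
    (G : E → ℝ) (hG : ContDiff ℝ (⊤ : ℕ∞) G)
    (hmaster : ∀ i k : ℕ, ∀ x, vact ((tapp R)^[i] X) (vact ((tapp R)^[k] X) G) x = 0) :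
    (∀ j k : ℕ, ∀ x,
        vact ((tapp R)^[k] X)
          (vact ((tapp R)^[k] X) (vact ((tapp R)^[j] (tapp P X)) G)) x = 0) ∧
    (∀ i j k : ℕ, ∀ x,
        vact ((tapp R)^[k] X)
          (fun y => vact ((tapp R)^[k] X) (vact ((tapp R)^[i] (tapp P X)) G) y
                      * vact ((tapp R)^[j] (tapp P X)) G y
                    - vact ((tapp R)^[k] X) (vact ((tapp R)^[j] (tapp P X)) G) y
                      * vact ((tapp R)^[i] (tapp P X)) G y) x = 0) := by
  have hPXs : ContDiff ℝ (⊤ : ℕ∞) (tapp P X) := hPsmooth.clm_apply hX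
  have hXi : ∀ i, ContDiff ℝ (⊤ : ℕ∞) ((tapp R)^[i] X) := fun i => iter_tapp_contDiff hRsmooth i hX
  have hYj : ∀ j, ContDiff ℝ (⊤ : ℕ∞) ((tapp R)^[j] (tapp P X)) :=
    fun j => iter_tapp_contDiff hRsmooth j hPXs
  have hvbr := vbr_Xk_Yj a b hRsmooth hPsmooth hX hNij hrec hP hPX
  -- key commutation identity with polynomial expansion
  have key : ∀ (k j : ℕ) (f : E → ℝ), ContDiff ℝ (⊤ : ℕ∞) f → ∀ x,
      vact ((tapp R)^[k] X) (vact ((tapp R)^[j] (tapp P X)) f) x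
        = vact ((tapp R)^[j] (tapp P X)) (vact ((tapp R)^[k] X) f) x
          + ∑ i ∈ Finset.range ((Polynomial.X ^ j * dPoly a b k).natDegree + 1),
              (Polynomial.X ^ j * dPoly a b k).coeff i * vact ((tapp R)^[i] X) f x := by
    intro k j f hf x
    rw [vact_comm (hXi k) (hYj j) hf x]
    congr 1
    show fderiv ℝ f x (vbr ((tapp R)^[k] X) ((tapp R)^[j] (tapp P X)) x) = _
    rw [hvbr k j x, vact_aeval]
  have part1 : ∀ j k : ℕ, ∀ x,
      vact ((tapp R)^[k] X)
        (vact ((tapp R)^[k] X) (vact ((tapp R)^[j] (tapp P X)) G)) x = 0 := by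
    intro j k x
    have h1 : vact ((tapp R)^[k] X) (vact ((tapp R)^[j] (tapp P X)) G)
        = fun y => vact ((tapp R)^[j] (tapp P X)) (vact ((tapp R)^[k] X) G) y
            + ∑ i ∈ Finset.range ((Polynomial.X ^ j * dPoly a b k).natDegree + 1),
                (Polynomial.X ^ j * dPoly a b k).coeff i * vact ((tapp R)^[i] X) G y :=
      funext (key k j G hG)
    rw [h1]
    have hF : DifferentiableAt ℝ
        (vact ((tapp R)^[j] (tapp P X)) (vact ((tapp R)^[k] X) G)) x :=
      ((vact_contDiff (hYj j) (vact_contDiff (hXi k) hG)).differentiable (by simp) x)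
    have hS : ∀ i ∈ Finset.range ((Polynomial.X ^ j * dPoly a b k).natDegree + 1),
        DifferentiableAt ℝ
          (fun y => (Polynomial.X ^ j * dPoly a b k).coeff i
            * vact ((tapp R)^[i] X) G y) x := fun i _ =>
      ((vact_contDiff (hXi i) hG).differentiable (by simp) x).const_mul _
    rw [vact_add _ hF (DifferentiableAt.fun_sum hS), vact_sum _ hS]
    have hsum0 : ∑ i ∈ Finset.range ((Polynomial.X ^ j * dPoly a b k).natDegree + 1),
        vact ((tapp R)^[k] X)
          (fun y => (Polynomial.X ^ j * dPoly a b k).coeff i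
            * vact ((tapp R)^[i] X) G y) x = 0 := by
      refine Finset.sum_eq_zero fun i _ => ?_
      rw [vact_const_mul _ _ ((vact_contDiff (hXi i) hG).differentiable (by simp) x),
        hmaster k i x, mul_zero]
    rw [hsum0, add_zero]
    rw [key k j (vact ((tapp R)^[k] X) G) (vact_contDiff (hXi k) hG) x]
    have hz : vact ((tapp R)^[k] X) (vact ((tapp R)^[k] X) G) = fun _ => (0 : ℝ) :=
      funext fun y => hmaster k k y
    rw [hz, vact_zero]
    rw [Finset.sum_eq_zero fun i _ => by rw [hmaster i k x, mul_zero], add_zero]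
  refine ⟨part1, fun i j k x => ?_⟩
  have hGi : DifferentiableAt ℝ (vact ((tapp R)^[i] (tapp P X)) G) x :=
    (vact_contDiff (hYj i) hG).differentiable (by simp) x
  have hGj : DifferentiableAt ℝ (vact ((tapp R)^[j] (tapp P X)) G) x :=
    (vact_contDiff (hYj j) hG).differentiable (by simp) x
  have hA : DifferentiableAt ℝ
      (vact ((tapp R)^[k] X) (vact ((tapp R)^[i] (tapp P X)) G)) x :=
    (vact_contDiff (hXi k) (vact_contDiff (hYj i) hG)).differentiable (by simp) x
  have hC : DifferentiableAt ℝ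
      (vact ((tapp R)^[k] X) (vact ((tapp R)^[j] (tapp P X)) G)) x :=
    (vact_contDiff (hXi k) (vact_contDiff (hYj j) hG)).differentiable (by simp) x
  rw [vact_sub _ (hA.fun_mul hGj) (hC.fun_mul hGi), vact_mul _ hA hGj, vact_mul _ hC hGi,
    part1 i k x, part1 j k x]
  ring
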